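/- Let (X,Y) ~ Q with Y ∈ [0,∞) and X ∈ ℝ^J whose first coordinate is the constant 1, and suppose E_Q[XX'] is invertible. Let m : [0,∞) → ℝ be continuous, weakly increasing, with m(y)/log(y) → 1 as y → ∞. Assume E_Q[‖X‖] < ∞ and E_Q[‖X·log(Y)‖ | Y>0] < ∞. Define β(a) = E_Q[XX']⁻¹ E_Q[X·m(aY)] and γ = E_Q[XX']⁻¹ E_Q[X·1[Y>0]]. Then for every j ∈ {2,…,J}, β_j(a)/log(a) → γ_j as a → ∞; moreover, if γ_j ≠ 0 for some j ∈ {2,…,J}, then β_j(a) is continuous in a on [0,∞) with β_j(a) → 0 as a → 0 and |β_j(a)| → ∞ as a → ∞, and for every β* ∈ (0,∞) there exists a > 0 with |β_j(a)| = β*. -/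

import Mathlib

/-!
Since `m(y)/log y → 1` and `m` is continuous on `[0, ∞)`, `|m t| ≤ C (1 + log⁺ t)`, so
`|X m(aY)| ≤ C (1 + log⁺ a) · |X| (1 + log⁺ Y)`, an integrable envelope under the moment
assumptions. Dominated convergence then makes `a ↦ E[X m(aY)]` continuous and gives
`E[X m(aY)] / log a → E[X 1[Y>0]]`, because `m(aY)/log a → 1` where `Y > 0` and `→ 0` where
`Y = 0`. Both `β` and `γ` are images under the fixed matrix `E[XX']⁻¹`. At `a = 0` the regressand
`m(0)` is a multiple of the intercept, so `β(0) = m(0) e₀` vanishes off the intercept; with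
`|β_j(a)| ~ |γ_j| log a → ∞`, the intermediate value theorem yields every level `β* > 0`.
-/

open MeasureTheory Filter Set Real Topology

lemma exists_abs_le_mul_one_add_posLog {m : ℝ → ℝ} {c : ℝ} (hm_cont : ContinuousOn m (Ici 0))
    (hm : Tendsto (fun y => m y / log y) atTop (𝓝 c)) :
    ∃ C, 0 ≤ C ∧ ∀ t, 0 ≤ t → |m t| ≤ C * (1 + log⁺ t) := by
  obtain ⟨T, hT⟩ := eventually_atTop.1 <|
    (hm.abs.eventually (gt_mem_nhds (lt_add_one |c|))).and (eventually_gt_atTop 1)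
  obtain ⟨B, hB⟩ := (isCompact_Icc (a := 0) (b := T)).exists_bound_of_continuousOn
    (hm_cont.mono Icc_subset_Ici_self)
  have hC0 : 0 ≤ max B (|c| + 1) := (abs_nonneg c).trans (by simp)
  refine ⟨max B (|c| + 1), hC0, fun t ht => ?_⟩
  have h1 : 1 ≤ 1 + log⁺ t := le_add_of_nonneg_right posLog_nonneg
  rcases le_total t T with htT | hTt
  · calc |m t| ≤ B := hB t ⟨ht, htT⟩
      _ ≤ max B (|c| + 1) := le_max_left _ _
      _ ≤ max B (|c| + 1) * (1 + log⁺ t) := le_mul_of_one_le_right hC0 h1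
  · obtain ⟨hmt, ht1⟩ := hT t hTt
    have hlog : 0 < log t := log_pos ht1
    rw [abs_div, abs_of_pos hlog, div_lt_iff₀ hlog] at hmt
    calc |m t| ≤ (|c| + 1) * log t := hmt.le
      _ ≤ max B (|c| + 1) * (1 + log⁺ t) := by
        rw [posLog_eq_log (by rw [abs_of_pos (by linarith)]; exact ht1.le)]
        gcongr
        · exact le_max_right _ _
        · linarith

lemma abs_mul_comp_mul_le {m : ℝ → ℝ} {C : ℝ} (hC0 : 0 ≤ C)
    (hC : ∀ t, 0 ≤ t → |m t| ≤ C * (1 + log⁺ t)) {a y : ℝ} (ha : 0 ≤ a) (hy : 0 ≤ y) (z : ℝ) :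
    |z * m (a * y)| ≤ C * (1 + log⁺ a) * (|z| * (1 + log⁺ y)) := by
  have hpa : 0 ≤ log⁺ a := posLog_nonneg
  have hpy : 0 ≤ log⁺ y := posLog_nonneg
  calc |z * m (a * y)| = |z| * |m (a * y)| := abs_mul _ _
    _ ≤ |z| * (C * (1 + (log⁺ a + log⁺ y))) := by
      gcongr
      exact (hC _ (mul_nonneg ha hy)).trans (by gcongr; exact posLog_mul)
    _ ≤ C * (1 + log⁺ a) * (|z| * (1 + log⁺ y)) := by
      have : 0 ≤ |z| * C * (log⁺ a * log⁺ y) := by positivity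
      nlinarith

lemma tendsto_comp_mul_div_log {f : ℝ → ℝ} {c y : ℝ}
    (hf : Tendsto (fun t => f t / log t) atTop (𝓝 c)) (hy : 0 < y) :
    Tendsto (fun a => f (a * y) / log a) atTop (𝓝 c) := by
  have hay : Tendsto (fun a => a * y) atTop atTop := tendsto_id.atTop_mul_const hy
  have hratio : Tendsto (fun a => 1 + log y / log a) atTop (𝓝 1) := by
    simpa using tendsto_const_nhds.add (tendsto_const_nhds.div_atTop tendsto_log_atTop)
  simpa using ((hf.comp hay).mul hratio).congr' <| by
    filter_upwards [hay.eventually_gt_atTop 1, eventually_gt_atTop 1] with a hay1 ha1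
    have hla : log a ≠ 0 := (log_pos ha1).ne'
    have hlay : log (a * y) ≠ 0 := (log_pos hay1).ne'
    have hsplit : log (a * y) = log a + log y := log_mul (by positivity) hy.ne'
    simp only [Function.comp_apply]
    field_simp
    rw [hsplit]

section Integrals

variable {Ω : Type*} [MeasurableSpace Ω] {μ : Measure Ω} {Z Y : Ω → ℝ} {m : ℝ → ℝ} {C : ℝ}

lemma ContinuousOn.measurable_comp_of_nonneg (hm : ContinuousOn m (Ici 0)) (hY : Measurable Y)
    (hY0 : ∀ ω, 0 ≤ Y ω) : Measurable fun ω => m (Y ω) := by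
  have hext : Continuous fun t => m (max t 0) :=
    hm.comp_continuous (continuous_id.max continuous_const) fun t => le_max_right t 0
  have hcomp : (fun ω => m (Y ω)) = (fun t => m (max t 0)) ∘ Y :=
    funext fun ω => by simp only [Function.comp_apply, max_eq_left (hY0 ω)]
  exact hcomp ▸ hext.measurable.comp hY

lemma integrable_abs_mul_one_add_posLog (hZ : Integrable Z μ) (hY : Measurable Y)
    (hY0 : ∀ ω, 0 ≤ Y ω) (hZlog : IntegrableOn (fun ω => |Z ω| * |log (Y ω)|) {ω | 0 < Y ω} μ) :
    Integrable (fun ω => |Z ω| * (1 + log⁺ (Y ω))) μ := by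
  have hlog : Integrable (fun ω => |Z ω| * log⁺ (Y ω)) μ := by
    refine ((integrable_indicator_iff (measurableSet_lt measurable_const hY)).2 hZlog).mono'
      (hZ.abs.aestronglyMeasurable.mul (continuous_posLog.measurable.comp hY).aestronglyMeasurable)
      (ae_of_all _ fun ω => ?_)
    rcases (hY0 ω).lt_or_eq with hpos | hzero
    · rw [indicator_of_mem (show ω ∈ {ω | 0 < Y ω} from hpos), Real.norm_eq_abs,
        abs_of_nonneg (mul_nonneg (abs_nonneg _) posLog_nonneg)]
      gcongr
      exact max_le (abs_nonneg _) (le_abs_self _)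
    · simp [← hzero]
  exact (hZ.abs.add hlog).congr (ae_of_all _ fun ω => by simp only [Pi.add_apply]; ring)

variable (hZ : Measurable Z) (hY : Measurable Y) (hY0 : ∀ ω, 0 ≤ Y ω)
  (hm_cont : ContinuousOn m (Ici 0)) (hC0 : 0 ≤ C) (hC : ∀ t, 0 ≤ t → |m t| ≤ C * (1 + log⁺ t))
  (hdom : Integrable (fun ω => |Z ω| * (1 + log⁺ (Y ω))) μ)
include hZ hY hY0 hm_cont hC0 hC hdom

lemma continuousOn_integral_mul_comp_mul :
    ContinuousOn (fun a => ∫ ω, Z ω * m (a * Y ω) ∂μ) (Ici 0) := by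
  intro a₀ ha₀
  refine continuousWithinAt_of_dominated
    (bound := fun ω => C * (1 + log⁺ (a₀ + 1)) * (|Z ω| * (1 + log⁺ (Y ω))))
    ?_ ?_ (hdom.const_mul _) ?_
  · filter_upwards [self_mem_nhdsWithin] with a ha
    exact (hZ.mul (hm_cont.measurable_comp_of_nonneg (hY.const_mul a)
      fun ω => mul_nonneg ha (hY0 ω))).aestronglyMeasurable
  · filter_upwards [self_mem_nhdsWithin,
      nhdsWithin_le_nhds (eventually_le_nhds (lt_add_one a₀))] with a ha haA
    refine ae_of_all _ fun ω => (abs_mul_comp_mul_le hC0 hC ha (hY0 ω) _).trans ?_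
    gcongr
    exact mul_nonneg (abs_nonneg _) (add_nonneg zero_le_one posLog_nonneg)
  · refine ae_of_all _ fun ω => continuousWithinAt_const.mul ?_
    exact (hm_cont.comp (continuousOn_id.mul continuousOn_const)
      fun a ha => mul_nonneg ha (hY0 ω)) a₀ ha₀

lemma tendsto_integral_mul_comp_mul_div_log
    (hm : Tendsto (fun y => m y / log y) atTop (𝓝 1)) :
    Tendsto (fun a => (∫ ω, Z ω * m (a * Y ω) ∂μ) / log a) atTop
      (𝓝 (∫ ω, Z ω * (if 0 < Y ω then 1 else 0) ∂μ)) := by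
  simp_rw [← integral_div]
  refine tendsto_integral_filter_of_dominated_convergence
    (fun ω => 2 * C * (|Z ω| * (1 + log⁺ (Y ω)))) ?_ ?_ (hdom.const_mul _) (ae_of_all _ ?_)
  · filter_upwards [eventually_ge_atTop 0] with a ha
    exact ((hZ.mul (hm_cont.measurable_comp_of_nonneg (hY.const_mul a)
      fun ω => mul_nonneg ha (hY0 ω))).div_const _).aestronglyMeasurable
  · filter_upwards [eventually_ge_atTop (exp 1)] with a ha
    have ha1 : 1 ≤ a := one_le_exp zero_le_one |>.trans ha
    have hla : 1 ≤ log a := (le_log_iff_exp_le (by linarith)).2 ha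
    refine ae_of_all _ fun ω => ?_
    have hdom0 : 0 ≤ C * (|Z ω| * (1 + log⁺ (Y ω))) :=
      mul_nonneg hC0 (mul_nonneg (abs_nonneg _) (add_nonneg zero_le_one posLog_nonneg))
    have hlpos : 0 < log a := by linarith
    simp only [norm_div, Real.norm_eq_abs]
    rw [abs_of_pos hlpos, div_le_iff₀ hlpos]
    calc |Z ω * m (a * Y ω)| ≤ C * (1 + log⁺ a) * (|Z ω| * (1 + log⁺ (Y ω))) :=
          abs_mul_comp_mul_le hC0 hC (by linarith) (hY0 ω) _
      _ ≤ 2 * C * (|Z ω| * (1 + log⁺ (Y ω))) * log a := by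
          rw [posLog_eq_log (by rwa [abs_of_nonneg (by linarith)])]
          nlinarith
  · intro ω
    rcases (hY0 ω).lt_or_eq with hpos | hzero
    · simpa [hpos, mul_div_assoc] using (tendsto_comp_mul_div_log hm hpos).const_mul (Z ω)
    · simpa [← hzero, mul_div_assoc] using
        (tendsto_const_nhds (x := Z ω * m 0)).div_atTop tendsto_log_atTop

end Integrals

section Coefficients

open Matrix

variable {ι κ : Type*} [Fintype ι]

lemma tendsto_mulVec_apply_div (M : Matrix κ ι ℝ) {v : ℝ → ι → ℝ} {w : ι → ℝ} {c : ℝ → ℝ}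
    {l : Filter ℝ} (h : ∀ i, Tendsto (fun a => v a i / c a) l (𝓝 (w i))) (k : κ) :
    Tendsto (fun a => (M *ᵥ v a) k / c a) l (𝓝 ((M *ᵥ w) k)) := by
  simp only [Matrix.mulVec, dotProduct, Finset.sum_div, mul_div_assoc]
  exact tendsto_finsetSum _ fun i _ => (h i).const_mul (M k i)

lemma continuousOn_mulVec_apply (M : Matrix κ ι ℝ) {v : ℝ → ι → ℝ} {s : Set ℝ}
    (h : ∀ i, ContinuousOn (fun a => v a i) s) (k : κ) :
    ContinuousOn (fun a => (M *ᵥ v a) k) s := by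
  simp only [Matrix.mulVec, dotProduct]
  exact continuousOn_finsetSum _ fun i _ => continuousOn_const.mul (h i)

lemma Matrix.inv_mulVec_smul_col {R : Type*} [CommRing R] [DecidableEq ι] {G : Matrix ι ι R}
    (hG : IsUnit G) (c : R) (k : ι) : G⁻¹ *ᵥ (c • G.col k) = (Pi.single k c : ι → R) := by
  rw [← mulVec_single_one, ← mulVec_smul, mulVec_mulVec,
    nonsing_inv_mul _ ((isUnit_iff_isUnit_det G).1 hG), one_mulVec, ← Pi.single_smul, smul_eq_mul,
    mul_one]

end Coefficients

lemma tendsto_abs_atTop_of_tendsto_div_log {f : ℝ → ℝ} {c : ℝ}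
    (hf : Tendsto (fun a => f a / log a) atTop (𝓝 c)) (hc : c ≠ 0) :
    Tendsto (fun a => |f a|) atTop atTop := by
  refine ((tendsto_abs_atTop_atTop.comp tendsto_log_atTop).atTop_mul_pos (abs_pos.2 hc)
    hf.abs).congr' ?_
  filter_upwards [eventually_gt_atTop 1] with a ha
  simp only [Function.comp_apply, abs_div]
  exact mul_div_cancel₀ _ (abs_pos.2 (log_pos ha).ne').ne'

lemma exists_pos_abs_eq_of_continuousOn {f : ℝ → ℝ} (hf : ContinuousOn f (Ici 0)) (hf0 : f 0 = 0)
    (htop : Tendsto (fun a => |f a|) atTop atTop) {b : ℝ} (hb : 0 < b) :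
    ∃ a, 0 < a ∧ |f a| = b := by
  obtain ⟨a, ha, hfa⟩ := intermediate_value_Ici hf.abs htop (show b ∈ Ici |f 0| by
    simpa [hf0] using hb.le)
  refine ⟨a, lt_of_le_of_ne ha ?_, hfa⟩
  rintro rfl
  simp [hf0, hb.ne] at hfa

theorem stmt_13_general
    {Ω : Type*} [MeasurableSpace Ω] (μ : Measure Ω)
    {J : ℕ} (hJ : 0 < J)
    (X : Ω → Fin J → ℝ) (Y : Ω → ℝ)
    (hXmeas : Measurable X) (hYmeas : Measurable Y)
    (hYnonneg : ∀ ω, 0 ≤ Y ω)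
    -- the first element of X is a constant
    (hconst : ∀ ω, X ω ⟨0, hJ⟩ = 1)
    (m : ℝ → ℝ)
    (hm_cont : ContinuousOn m (Ici 0))
    (hm_loglike : Tendsto (fun y => m y / Real.log y) atTop (nhds 1))
    -- (finite expectations) E[‖X‖] < ∞ and E[‖X log Y‖ ∣ Y > 0] < ∞
    (hXint : Integrable (fun ω => ‖X ω‖) μ)
    (hXlogint : IntegrableOn (fun ω => ‖X ω‖ * |Real.log (Y ω)|) {ω | 0 < Y ω} μ)
    (G : Matrix (Fin J) (Fin J) ℝ)
    (hG : G = Matrix.of fun i j => ∫ ω, X ω i * X ω j ∂μ)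
    (hGunit : IsUnit G)
    (β : ℝ → Fin J → ℝ)
    (hβ : ∀ a, β a = G⁻¹.mulVec fun i => ∫ ω, X ω i * m (a * Y ω) ∂μ)
    (γ : Fin J → ℝ)
    (hγ : γ = G⁻¹.mulVec fun i => ∫ ω, X ω i * (if 0 < Y ω then (1 : ℝ) else 0) ∂μ) :
    (∀ j : Fin J, j ≠ ⟨0, hJ⟩ →
      Tendsto (fun a => β a j / Real.log a) atTop (nhds (γ j))) ∧
    (∀ j : Fin J, j ≠ ⟨0, hJ⟩ → γ j ≠ 0 →
      ContinuousOn (fun a => β a j) (Ici 0) ∧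
      Tendsto (fun a => β a j) (nhdsWithin 0 (Ici 0)) (nhds 0) ∧
      Tendsto (fun a => |β a j|) atTop atTop ∧
      ∀ βstar : ℝ, 0 < βstar → ∃ a : ℝ, 0 < a ∧ |β a j| = βstar) := by
  obtain ⟨C, hC0, hC⟩ := exists_abs_le_mul_one_add_posLog hm_cont hm_loglike
  have hXi : ∀ i, Measurable fun ω => X ω i := fun i => hXmeas.eval
  have hdom : ∀ i, Integrable (fun ω => |X ω i| * (1 + log⁺ (Y ω))) μ := fun i =>
    integrable_abs_mul_one_add_posLog
      (hXint.mono' (hXi i).aestronglyMeasurable (ae_of_all _ fun ω => norm_le_pi_norm (X ω) i))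
      hYmeas hYnonneg
      (hXlogint.mono' ((hXi i).abs.mul (hYmeas.log.abs)).aestronglyMeasurable
        (ae_of_all _ fun ω => by
          rw [Real.norm_eq_abs, abs_mul, abs_abs, abs_abs]
          exact mul_le_mul_of_nonneg_right (norm_le_pi_norm (X ω) i) (abs_nonneg _)))
  have hlim : ∀ j, Tendsto (fun a => β a j / log a) atTop (𝓝 (γ j)) := fun j => by
    simpa only [hβ, hγ] using tendsto_mulVec_apply_div G⁻¹ (fun i =>
      tendsto_integral_mul_comp_mul_div_log (hXi i) hYmeas hYnonneg hm_cont hC0 hC (hdom i)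
        hm_loglike) j
  have hcont : ∀ j, ContinuousOn (fun a => β a j) (Ici 0) := fun j => by
    simpa only [hβ] using continuousOn_mulVec_apply G⁻¹ (fun i =>
      continuousOn_integral_mul_comp_mul (hXi i) hYmeas hYnonneg hm_cont hC0 hC (hdom i)) j
  have hβ0 : β 0 = Pi.single ⟨0, hJ⟩ (m 0) := by
    rw [hβ, ← Matrix.inv_mulVec_smul_col hGunit (m 0)]
    congr 1
    ext i
    simp [hG, hconst, integral_mul_const, mul_comm]
  refine ⟨fun j _ => hlim j, fun j hj hγj => ⟨hcont j, ?_, ?_, ?_⟩⟩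
  · simpa [ContinuousWithinAt, hβ0, hj] using hcont j 0 self_mem_Ici
  · exact tendsto_abs_atTop_of_tendsto_div_log (hlim j) hγj
  · exact fun b hb => exists_pos_abs_eq_of_continuousOn (hcont j) (by simp [hβ0, hj])
      (tendsto_abs_atTop_of_tendsto_div_log (hlim j) hγj) hb

/-- Chen–Roth, Proposition A.3, OLS estimands: with population
regression coefficients `β(a) = E[XX']⁻¹E[X·m(aY)]` and `γ = E[XX']⁻¹E[X·1[Y>0]]`,
for every non-constant coordinate `j`, `β_j(a)/log a → γ_j` as `a → ∞`; and if
`γ_j ≠ 0`, then `β_j` is continuous on `[0,∞)`, `β_j(a) → 0` as `a → 0`,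
`|β_j(a)| → ∞` as `a → ∞`, and `|β_j(a)|` attains every value `β* ∈ (0,∞)`. -/
theorem stmt_13
    {Ω : Type*} [MeasurableSpace Ω] (μ : Measure Ω) [IsProbabilityMeasure μ]
    {J : ℕ} (hJ : 0 < J)
    (X : Ω → Fin J → ℝ) (Y : Ω → ℝ)
    (hXmeas : Measurable X) (hYmeas : Measurable Y)
    (hYnonneg : ∀ ω, 0 ≤ Y ω)
    -- the first element of X is a constant
    (hconst : ∀ ω, X ω ⟨0, hJ⟩ = 1)
    (m : ℝ → ℝ)
    (hm_cont : ContinuousOn m (Ici 0))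
    (hm_mono : MonotoneOn m (Ici 0))
    (hm_loglike : Tendsto (fun y => m y / Real.log y) atTop (nhds 1))
    -- (finite expectations) E[‖X‖] < ∞ and E[‖X log Y‖ ∣ Y > 0] < ∞
    (hXint : Integrable (fun ω => ‖X ω‖) μ)
    (hXlogint : IntegrableOn (fun ω => ‖X ω‖ * |Real.log (Y ω)|) {ω | 0 < Y ω} μ)
    (G : Matrix (Fin J) (Fin J) ℝ)
    (hG : G = Matrix.of fun i j => ∫ ω, X ω i * X ω j ∂μ)
    (hGunit : IsUnit G)
    (β : ℝ → Fin J → ℝ)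
    (hβ : ∀ a, β a = G⁻¹.mulVec fun i => ∫ ω, X ω i * m (a * Y ω) ∂μ)
    (γ : Fin J → ℝ)
    (hγ : γ = G⁻¹.mulVec fun i => ∫ ω, X ω i * (if 0 < Y ω then (1 : ℝ) else 0) ∂μ) :
    (∀ j : Fin J, j ≠ ⟨0, hJ⟩ →
      Tendsto (fun a => β a j / Real.log a) atTop (nhds (γ j))) ∧
    (∀ j : Fin J, j ≠ ⟨0, hJ⟩ → γ j ≠ 0 →
      ContinuousOn (fun a => β a j) (Ici 0) ∧
      Tendsto (fun a => β a j) (nhdsWithin 0 (Ici 0)) (nhds 0) ∧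
      Tendsto (fun a => |β a j|) atTop atTop ∧
      ∀ βstar : ℝ, 0 < βstar → ∃ a : ℝ, 0 < a ∧ |β a j| = βstar) :=
  stmt_13_general μ hJ X Y hXmeas hYmeas hYnonneg hconst m hm_cont hm_loglike hXint hXlogint G hG
    hGunit β hβ γ hγ
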